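/- Let X be a finite species set and 𝒯 a set of MUL-trees with label sets contained in X. For any integer d, there exists a duplication tree on X consistent with every MUL-tree in 𝒯 that has at most d duplication nodes on every directed path from the root to a leaf if and only if there exists a beaded tree on X weakly displaying every MUL-tree in 𝒯 that has at most d beads on every directed path. -/

import Mathlib

/-!
Common formal framework for MUL-trees, phylogenetic networks, beaded trees,
duplication trees, weak embeddings and related operations, following
van Iersel, Janssen, Jones, Murakami, Zeh,
"Polynomial-Time Algorithms for Phylogenetic Inference Problems involving
duplication and reticulation".

All graphs are directed multigraphs on natural-number vertices, given by a
finite vertex set, an edge-multiplicity function and a (partial) leaf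
labelling by species (also natural numbers).
-/

open scoped Classical

structure DG where
  verts : Finset ℕ
  mult : ℕ → ℕ → ℕ
  label : ℕ → Option ℕ

namespace DG

/-- An arc is a pair of endpoints together with the index of the parallel copy. -/
abbrev Arc := ℕ × ℕ × ℕ

def Adj (G : DG) (u v : ℕ) : Prop := 0 < G.mult u v

def outDeg (G : DG) (u : ℕ) : ℕ := ∑ v ∈ G.verts, G.mult u v
def inDeg (G : DG) (v : ℕ) : ℕ := ∑ u ∈ G.verts, G.mult u v

/-- `G.Reaches u v` : `u` is an ancestor of `v` (possibly `u = v`). -/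
def Reaches (G : DG) : ℕ → ℕ → Prop := Relation.ReflTransGen G.Adj
/-- `G.SReaches u v` : `u` is a strict ancestor of `v` (in an acyclic graph). -/
def SReaches (G : DG) : ℕ → ℕ → Prop := Relation.TransGen G.Adj
def Acyclic (G : DG) : Prop := ∀ v, ¬ G.SReaches v v

def IsRoot (G : DG) (v : ℕ) : Prop := v ∈ G.verts ∧ G.inDeg v = 0 ∧ G.outDeg v = 1
def IsLeafNode (G : DG) (v : ℕ) : Prop := v ∈ G.verts ∧ G.inDeg v = 1 ∧ G.outDeg v = 0
def IsTreeNode (G : DG) (v : ℕ) : Prop := v ∈ G.verts ∧ G.inDeg v = 1 ∧ G.outDeg v = 2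
def IsRetic (G : DG) (v : ℕ) : Prop := v ∈ G.verts ∧ G.inDeg v = 2 ∧ G.outDeg v = 1
def IsDupNode (G : DG) (v : ℕ) : Prop := v ∈ G.verts ∧ G.inDeg v = 1 ∧ G.outDeg v = 1

/-- The reticulation number: the number of reticulation nodes. -/
def reticNum (G : DG) : ℕ := (G.verts.filter (fun v => G.inDeg v = 2 ∧ G.outDeg v = 1)).card
/-- The duplication number: the number of duplication nodes. -/
def dupNum (G : DG) : ℕ := (G.verts.filter (fun v => G.inDeg v = 1 ∧ G.outDeg v = 1)).card
/-- The number of beads (counted by their bottom nodes). -/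
noncomputable def beadNum (G : DG) : ℕ :=
  (G.verts.filter (fun v => ∃ u ∈ G.verts, G.mult u v = 2)).card

def Supported (G : DG) : Prop := ∀ u v, G.Adj u v → u ∈ G.verts ∧ v ∈ G.verts
/-- Exactly the leaves carry labels. -/
def LabelsOnLeaves (G : DG) : Prop := ∀ v, (∃ x, G.label v = some x) ↔ G.IsLeafNode v

/-- The number of leaves (= labelled nodes). -/
def numLeaves (G : DG) : ℕ := (G.verts.filter (fun v => (G.label v).isSome)).card

/-- A multi-labelled tree (MUL-tree) with labels contained in `X`. -/
structure IsMulTree (X : Finset ℕ) (G : DG) : Prop where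
  root : ∃! r, G.IsRoot r
  nodes : ∀ v ∈ G.verts, G.IsRoot v ∨ G.IsTreeNode v ∨ G.IsLeafNode v
  acyclic : G.Acyclic
  simple : ∀ u v, G.mult u v ≤ 1
  supported : G.Supported
  labels : G.LabelsOnLeaves
  labelsSub : ∀ v x, G.label v = some x → x ∈ X

/-- A rooted binary phylogenetic network on `X` (parallel edges allowed). -/
structure IsNetwork (X : Finset ℕ) (G : DG) : Prop where
  root : ∃! r, G.IsRoot r
  nodes : ∀ v ∈ G.verts, G.IsRoot v ∨ G.IsTreeNode v ∨ G.IsRetic v ∨ G.IsLeafNode v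
  acyclic : G.Acyclic
  supported : G.Supported
  labels : G.LabelsOnLeaves
  labelsSub : ∀ v x, G.label v = some x → x ∈ X
  labelsOnto : ∀ x ∈ X, ∃! v, G.label v = some x

/-- A duplication tree on `X`. -/
structure IsDupTree (X : Finset ℕ) (G : DG) : Prop where
  root : ∃! r, G.IsRoot r
  nodes : ∀ v ∈ G.verts, G.IsRoot v ∨ G.IsTreeNode v ∨ G.IsDupNode v ∨ G.IsLeafNode v
  acyclic : G.Acyclic
  simple : ∀ u v, G.mult u v ≤ 1
  supported : G.Supported
  labels : G.LabelsOnLeaves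
  labelsSub : ∀ v x, G.label v = some x → x ∈ X
  labelsOnto : ∀ x ∈ X, ∃! v, G.label v = some x

/-- A beaded tree: a phylogenetic network in which every reticulation node is
the bottom node of a bead (a pair of parallel edges). -/
def IsBeadedTree (X : Finset ℕ) (G : DG) : Prop :=
  IsNetwork X G ∧ ∀ v ∈ G.verts, G.inDeg v = 2 → ∃ u, G.mult u v = 2

def ArcOK (G : DG) (e : Arc) : Prop := e.2.2 < G.mult e.1 e.2.1

/-- `G.IsWalk p a b` : `p` is a (nonempty) directed path of arcs from `a` to `b`. -/
def IsWalk (G : DG) (p : List Arc) (a b : ℕ) : Prop :=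
  p ≠ [] ∧ (∀ e ∈ p, G.ArcOK e) ∧
  List.Chain' (fun e f : Arc => e.2.1 = f.1) p ∧
  p.head?.map Prod.fst = some a ∧
  p.getLast?.map (fun e => e.2.1) = some b

/-- `v` is a node visited by the walk `p`. -/
def OnWalk (p : List Arc) (v : ℕ) : Prop := ∃ e ∈ p, e.1 = v ∨ e.2.1 = v

/-- A weak embedding of a MUL-tree `T` into a network `N`: nodes map to nodes,
edges map to directed paths and the two paths out of an internal node start
with different out-edges. -/
def WeakEmbedding (T N : DG) (h : ℕ → ℕ) (hE : ℕ → ℕ → List Arc) : Prop :=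
  (∀ v ∈ T.verts, h v ∈ N.verts) ∧
  (∀ v, T.IsLeafNode v → N.IsLeafNode (h v) ∧ N.label (h v) = T.label v) ∧
  (∀ u v, T.Adj u v → N.IsWalk (hE u v) (h u) (h v)) ∧
  (∀ x y y', T.Adj x y → T.Adj x y' → y ≠ y' → (hE x y).head? ≠ (hE x y').head?)

/-- `N.Displays T` : `N` weakly displays `T`. -/
def Displays (N T : DG) : Prop := ∃ h hE, WeakEmbedding T N h hE

/-- `x` is a least common ancestor of `y` and `z`. -/
def IsLCA (G : DG) (x y z : ℕ) : Prop :=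
  G.Reaches x y ∧ G.Reaches x z ∧
  ∀ w, G.SReaches x w → ¬ (G.Reaches w y ∧ G.Reaches w z)

/-- A duplication mapping from a MUL-tree `T` to a duplication tree `D`. -/
def DupMapping (T D : DG) (M : ℕ → ℕ) : Prop :=
  (∀ v, T.IsLeafNode v → D.IsLeafNode (M v) ∧ D.label (M v) = T.label v) ∧
  (∀ u v, T.Adj u v → D.SReaches (M u) (M v)) ∧
  (∀ u v v', T.Adj u v → T.Adj u v' → v ≠ v' →
    D.IsLCA (M u) (M v) (M v') ∨ D.IsDupNode (M u))

/-- `D.ConsistentWith T` : there is a duplication mapping from `T` to `D`. -/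
def ConsistentWith (D T : DG) : Prop := ∃ M, DupMapping T D M

/-- A solution to Beaded Tree on `𝒯`: a beaded tree on `X` weakly displaying
every MUL-tree of `𝒯`. -/
def Solution (X : Finset ℕ) (Ts : Set DG) (B : DG) : Prop :=
  IsBeadedTree X B ∧ ∀ T ∈ Ts, B.Displays T

/-- An optimal solution: minimum reticulation number among all solutions. -/
def OptSolution (X : Finset ℕ) (Ts : Set DG) (B : DG) : Prop :=
  Solution X Ts B ∧ ∀ B', Solution X Ts B' → B.reticNum ≤ B'.reticNum

/-- Number of beads traversed by a walk. -/
def beadsOnWalk (G : DG) (p : List Arc) : ℕ :=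
  p.countP (fun e => decide (G.mult e.1 e.2.1 = 2))

/-- Number of duplication nodes traversed by a walk (as arc sources). -/
def dupsOnWalk (G : DG) (p : List Arc) : ℕ :=
  p.countP (fun e => decide (G.inDeg e.1 = 1 ∧ G.outDeg e.1 = 1))

/-- The bead depth: the maximum number of beads on any directed path. -/
noncomputable def beadDepth (G : DG) : ℕ :=
  sSup {n | ∃ p a b, G.IsWalk p a b ∧ G.beadsOnWalk p = n}

/-- A solution to Beaded Tree Depth of minimum bead depth. -/
def DepthOptSolution (X : Finset ℕ) (Ts : Set DG) (B : DG) : Prop :=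
  Solution X Ts B ∧ ∀ B', Solution X Ts B' → B.beadDepth ≤ B'.beadDepth

/-- The child of the root is the top node of a bead. -/
def HasBeadAtRoot (G : DG) : Prop :=
  ∃ r u v, G.IsRoot r ∧ G.Adj r u ∧ G.mult u v = 2

/-- `B` is obtained from `B'` by inserting a new bead `(u,v)` between the root
`r` of `B'` and its child `a`.  Equivalently, `B'` is obtained from `B` by
deleting `u` and `v` and adding an edge from the root to the child of `v`. -/
def AddBeadAtRoot (B' B : DG) : Prop :=
  ∃ r a u v, B'.IsRoot r ∧ B'.Adj r a ∧ u ∉ B'.verts ∧ v ∉ B'.verts ∧ u ≠ v ∧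
    B.verts = insert u (insert v B'.verts) ∧
    B.label = (fun w => if w = u ∨ w = v then none else B'.label w) ∧
    B.mult = (fun s t =>
      if s = r ∧ t = a then 0
      else if s = r ∧ t = u then 1
      else if s = u ∧ t = v then 2
      else if s = v ∧ t = a then 1
      else if s = u ∨ s = v ∨ t = u ∨ t = v then 0
      else B'.mult s t)

/-- `N` is obtained by joining `N1` and `N2`: the two roots are identified into
a single node `u`, which becomes the child of a new root `r`.  The embeddings
`f1`, `f2` realise the copies of `N1` and `N2` inside `N`. -/
def IsJoinOf (N N1 N2 : DG) : Prop :=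
  ∃ (f1 f2 : ℕ → ℕ) (r u : ℕ),
    N.IsRoot r ∧ u ∈ N.verts ∧ N.mult r u = 1 ∧
    Set.InjOn f1 N1.verts ∧ Set.InjOn f2 N2.verts ∧
    (∀ v, N1.IsRoot v → f1 v = u) ∧ (∀ v, N2.IsRoot v → f2 v = u) ∧
    (∀ w, w ∈ N.verts ↔ (w = r ∨ (∃ v ∈ N1.verts, f1 v = w) ∨ (∃ v ∈ N2.verts, f2 v = w))) ∧
    (∀ v1 ∈ N1.verts, ∀ v2 ∈ N2.verts, f1 v1 = f2 v2 → N1.IsRoot v1 ∧ N2.IsRoot v2) ∧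
    (∀ v ∈ N1.verts, f1 v ≠ r) ∧ (∀ v ∈ N2.verts, f2 v ≠ r) ∧
    (∀ a ∈ N1.verts, ∀ b ∈ N1.verts, N.mult (f1 a) (f1 b) = N1.mult a b) ∧
    (∀ a ∈ N2.verts, ∀ b ∈ N2.verts, N.mult (f2 a) (f2 b) = N2.mult a b) ∧
    (∀ a b, N.Adj a b →
      (a = r ∧ b = u) ∨
      (∃ a' ∈ N1.verts, ∃ b' ∈ N1.verts, f1 a' = a ∧ f1 b' = b ∧ N1.Adj a' b') ∨
      (∃ a' ∈ N2.verts, ∃ b' ∈ N2.verts, f2 a' = a ∧ f2 b' = b ∧ N2.Adj a' b')) ∧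
    (∀ v ∈ N1.verts, N.label (f1 v) = N1.label v) ∧
    (∀ v ∈ N2.verts, N.label (f2 v) = N2.label v) ∧
    N.label r = none

/-- Delete a node and all incident edges. -/
def deleteNode (G : DG) (v : ℕ) : DG where
  verts := G.verts.erase v
  mult := fun a b => if a = v ∨ b = v then 0 else G.mult a b
  label := fun a => if a = v then none else G.label a

/-- Suppress an in-degree-1 out-degree-1 node `v` with parent `p` and child `c`. -/
def suppressNode (G : DG) (v p c : ℕ) : DG where
  verts := G.verts.erase v
  mult := fun a b =>
    if a = v ∨ b = v then 0
    else if a = p ∧ b = c then G.mult a b + 1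
    else G.mult a b
  label := fun a => if a = v then none else G.label a

/-- One step of the restriction procedure for label set `S`: delete a leaf
labelled in `S` or an unlabelled node of out-degree 0, or suppress an
unlabelled node of in-degree 1 and out-degree 1. -/
inductive RStep (S : Finset ℕ) : DG → DG → Prop
  | del (G : DG) (v : ℕ) : v ∈ G.verts →
      ((∃ x ∈ S, G.label v = some x) ∨ (G.label v = none ∧ G.outDeg v = 0)) →
      RStep S G (G.deleteNode v)
  | suppress (G : DG) (v p c : ℕ) : v ∈ G.verts → G.label v = none →
      G.mult p v = 1 → G.inDeg v = 1 → G.mult v c = 1 → G.outDeg v = 1 →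
      RStep S G (G.suppressNode v p c)

/-- `Restricts S G G'` : `G' = G ∖ S`, i.e. `G'` is obtained from `G` by
deleting all leaves labelled in `S` and exhaustively deleting unlabelled nodes
of out-degree 0 and suppressing in-degree-1 out-degree-1 nodes. -/
def Restricts (S : Finset ℕ) (G G' : DG) : Prop :=
  Relation.ReflTransGen (RStep S) G G' ∧ ∀ H, ¬ RStep S G' H

/-- `𝒯 ∖ S` for a set of MUL-trees (empty results discarded). -/
def SetRestrict (S : Finset ℕ) (Ts : Set DG) : Set DG :=
  {T' | T'.verts.Nonempty ∧ ∃ T ∈ Ts, Restricts S T T'}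

/-- The member of the depth-1 forest of `T` keeping `y` and discarding the
subtree rooted at `y'` (here `r` is the root, `x` its child, `y,y'` the
children of `x`, which is suppressed). -/
noncomputable def f1del (T : DG) (r x y y' : ℕ) : DG where
  verts := (T.verts.filter (fun v => ¬ T.Reaches y' v)).erase x
  mult := fun a b =>
    if a = r ∧ b = y then 1
    else if a = x ∨ b = x ∨ T.Reaches y' a ∨ T.Reaches y' b then 0
    else T.mult a b
  label := fun v => if v = x ∨ T.Reaches y' v then none else T.label v

/-- `T'` is one of the two members of the depth-1 forest `F1(T)`. -/
def InF1 (T T' : DG) : Prop :=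
  ∃ r x y y', T.IsRoot r ∧ T.Adj r x ∧ T.Adj x y ∧ T.Adj x y' ∧ y ≠ y' ∧
    T' = f1del T r x y y'

/-- `F1(𝒯)`. -/
def F1Set (Ts : Set DG) : Set DG := {T' | ∃ T ∈ Ts, InF1 T T'}

/-- Two species labels occur in the same member of `F1(𝒯)`. -/
def SplitRel (Ts : Set DG) (a b : ℕ) : Prop :=
  ∃ T' ∈ F1Set Ts, (∃ u, T'.label u = some a) ∧ (∃ v, T'.label v = some b)

/-- `S` is one of the classes of the split partition of `X` for `𝒯`. -/
def SplitPart (X : Finset ℕ) (Ts : Set DG) (S : Finset ℕ) : Prop :=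
  ∃ a ∈ X, S = X.filter (fun b => Relation.EqvGen (SplitRel Ts) a b)

end DG

/-!
A duplication tree and a beaded tree encode the same object. Blowing every duplication node up
into a bead turns a duplication tree into a beaded tree, and contracting every bead to its bottom
node turns a beaded tree back into a duplication tree.

A duplication mapping `M` of a MUL-tree gives a weak embedding `v ↦ M v` into the expansion: the
two paths leaving a node that is mapped to a duplication node use the two parallel arcs of its
bead. Conversely, a weak embedding into a beaded tree followed by the contraction is a duplication
mapping. A node whose image is a bead top goes to a duplication node, and any other internal
node goes to the least common ancestor of the images of its children, because the two paths
leave it along distinct arcs of a tree node.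

The beads that a walk of the expansion passes through are the duplication nodes of its
projection, and the duplication nodes that a walk of the contraction passes through are the
beads of its lift. So the depth bounds carry over in both directions. In the expansion, a walk is
first extended to a root-to-leaf walk.
-/

namespace DG

variable {G : DG} {a b c u v v' w x y y' : ℕ}

section Degrees

lemma ArcOK.adj {e : Arc} (h : G.ArcOK e) : G.Adj e.1 e.2.1 := Nat.zero_lt_of_lt h

lemma sum_mult_le_outDeg (hs : G.Supported) (s : Finset ℕ) :
    ∑ x ∈ s, G.mult u x ≤ G.outDeg u :=
  Finset.sum_le_sum_of_ne_zero fun x _ hx => (hs u x (Nat.pos_of_ne_zero hx)).2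

lemma sum_mult_le_inDeg (hs : G.Supported) (s : Finset ℕ) :
    ∑ x ∈ s, G.mult x v ≤ G.inDeg v :=
  Finset.sum_le_sum_of_ne_zero fun x _ hx => (hs x v (Nat.pos_of_ne_zero hx)).1

lemma mult_le_outDeg (hs : G.Supported) : G.mult u v ≤ G.outDeg u := by
  simpa using sum_mult_le_outDeg hs {v}

lemma mult_le_inDeg (hs : G.Supported) : G.mult u v ≤ G.inDeg v := by
  simpa using sum_mult_le_inDeg (v := v) hs {u}

lemma mult_add_mult_le_outDeg (hs : G.Supported) (hne : v ≠ w) :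
    G.mult u v + G.mult u w ≤ G.outDeg u := by
  simpa [Finset.sum_pair hne] using sum_mult_le_outDeg hs {v, w}

lemma mult_add_mult_le_inDeg (hs : G.Supported) (hne : u ≠ w) :
    G.mult u v + G.mult w v ≤ G.inDeg v := by
  simpa [Finset.sum_pair hne] using sum_mult_le_inDeg hs {u, w}

lemma exists_adj_parent (h0 : G.inDeg v ≠ 0) : ∃ u ∈ G.verts, G.Adj u v := by
  obtain ⟨u, hu, hne⟩ := Finset.exists_ne_zero_of_sum_ne_zero h0
  exact ⟨u, hu, Nat.pos_of_ne_zero hne⟩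

lemma exists_adj_child (h0 : G.outDeg u ≠ 0) : ∃ v ∈ G.verts, G.Adj u v := by
  obtain ⟨v, hv, hne⟩ := Finset.exists_ne_zero_of_sum_ne_zero h0
  exact ⟨v, hv, Nat.pos_of_ne_zero hne⟩

lemma two_le_outDeg_of_arcOK (hs : G.Supported) {e f : Arc} (he : G.ArcOK e) (hf : G.ArcOK f)
    (hef : e.1 = f.1) (hne : e ≠ f) : 2 ≤ G.outDeg e.1 := by
  obtain ⟨x, y, i⟩ := e
  obtain ⟨x', y', j⟩ := f
  simp only [ArcOK] at he hf hef ⊢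
  subst hef
  by_cases hy : y = y'
  · subst hy
    have : i ≠ j := fun h => hne (by rw [h])
    have := mult_le_outDeg (u := x) (v := y) hs
    omega
  · have := mult_add_mult_le_outDeg (u := x) hs hy
    omega

lemma eq_or_eq_of_adj_of_outDeg_eq_two (hs : G.Supported) (h2 : G.outDeg u = 2)
    (hv : G.Adj u v) (hv' : G.Adj u v') (hne : v ≠ v') (hw : G.Adj u w) : w = v ∨ w = v' := by
  by_contra! hw'
  have := sum_mult_le_outDeg (u := u) hs {v, v', w}
  rw [Finset.sum_insert (by simp [hne, hw'.1.symm]), Finset.sum_pair hw'.2.symm] at this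
  simp only [Adj] at hv hv' hw
  omega

lemma exists_ne_adj_of_outDeg_eq_two (hsimple : ∀ u v, G.mult u v ≤ 1) (h2 : G.outDeg u = 2) :
    ∃ v v', v ≠ v' ∧ G.Adj u v ∧ G.Adj u v' := by
  obtain ⟨v, hv, huv⟩ := exists_adj_child (G := G) (u := u) (by omega)
  by_contra! hcon
  have : G.outDeg u = G.mult u v :=
    Finset.sum_eq_single v (fun w _ hwv => Nat.eq_zero_of_not_pos fun h => hcon w v hwv h huv)
      fun h => absurd hv h
  have := hsimple u v
  omega

end Degrees

section Walks

lemma isWalk_cons {e : Arc} {p : List Arc} :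
    G.IsWalk (e :: p) a b ↔
      (a = e.1 ∧ G.ArcOK e ∧ ((p = [] ∧ b = e.2.1) ∨ G.IsWalk p e.2.1 b)) := by
  cases p with
  | nil =>
    simp only [IsWalk, List.mem_singleton, forall_eq, List.head?_cons, List.getLast?_singleton,
      Option.map_some, Option.some_inj, true_and, ne_eq, reduceCtorEq, not_false_eq_true,
      List.Chain', List.isChain_singleton]
    tauto
  | cons f q =>
    simp only [IsWalk, List.Chain', List.isChain_cons_cons, List.head?_cons,
      List.getLast?_cons_cons, List.forall_mem_cons, Option.map_some, Option.some_inj]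
    constructor
    · rintro ⟨-, ⟨hok, hoks⟩, ⟨hef, hch⟩, hh, hl⟩
      exact ⟨hh.symm, hok, Or.inr ⟨by simp, hoks, hch, hef.symm, hl⟩⟩
    · rintro ⟨rfl, hok, ⟨h, -⟩ | ⟨-, hoks, hch, hh, hl⟩⟩
      · exact absurd h (by simp)
      · exact ⟨by simp, ⟨hok, hoks⟩, ⟨hh.symm, hch⟩, rfl, hl⟩

lemma isWalk_singleton {e : Arc} (h : G.ArcOK e) : G.IsWalk [e] e.1 e.2.1 := by
  simp [isWalk_cons, h]

@[elab_as_elim]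
lemma IsWalk.induction_on {motive : ∀ a b p, G.IsWalk p a b → Prop} {p : List Arc}
    (hp : G.IsWalk p a b)
    (single : ∀ e (he : G.ArcOK e), motive e.1 e.2.1 [e] (isWalk_singleton he))
    (cons : ∀ e p b (he : G.ArcOK e) (hp : G.IsWalk p e.2.1 b), motive e.2.1 b p hp →
      motive e.1 b (e :: p) (isWalk_cons.mpr ⟨rfl, he, Or.inr hp⟩)) :
    motive a b p hp := by
  induction p generalizing a with
  | nil => exact absurd rfl hp.1
  | cons e p ih =>
    obtain ⟨rfl, hok, ⟨rfl, rfl⟩ | hw⟩ := isWalk_cons.mp hp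
    · exact single e hok
    · exact cons e p b hok hw (ih hw)

lemma IsWalk.append {p q : List Arc} (hp : G.IsWalk p a b) (hq : G.IsWalk q b c) :
    G.IsWalk (p ++ q) a c := by
  induction hp using IsWalk.induction_on with
  | single e he => exact isWalk_cons.mpr ⟨rfl, he, Or.inr hq⟩
  | cons e p b he _ ih => exact isWalk_cons.mpr ⟨rfl, he, Or.inr (ih hq)⟩

lemma IsWalk.sreaches {p : List Arc} (hp : G.IsWalk p a b) : G.SReaches a b := by
  induction hp using IsWalk.induction_on with
  | single e he => exact .single he.adj
  | cons e p b he _ ih => exact .head he.adj ih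

lemma IsWalk.exists_eq_cons {p : List Arc} (hp : G.IsWalk p a b) :
    ∃ e q, p = e :: q ∧ e.1 = a ∧ G.ArcOK e ∧ G.Reaches e.2.1 b := by
  obtain _ | ⟨e, q⟩ := p
  · exact absurd rfl hp.1
  obtain ⟨rfl, he, ⟨-, rfl⟩ | hq⟩ := isWalk_cons.mp hp
  · exact ⟨e, q, rfl, rfl, he, .refl⟩
  · exact ⟨e, q, rfl, rfl, he, hq.sreaches.to_reflTransGen⟩

lemma IsWalk.start_mem {p : List Arc} (hs : G.Supported) (hp : G.IsWalk p a b) : a ∈ G.verts := by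
  obtain ⟨e, -, -, rfl, he, -⟩ := hp.exists_eq_cons
  exact (hs _ _ he.adj).1

lemma IsWalk.end_mem {p : List Arc} (hs : G.Supported) (hp : G.IsWalk p a b) : b ∈ G.verts := by
  induction hp using IsWalk.induction_on with
  | single e he => exact (hs _ _ he.adj).2
  | cons e p b _ _ ih => exact ih

lemma exists_isWalk_of_sreaches (h : G.SReaches a b) : ∃ p, G.IsWalk p a b := by
  induction h with
  | single h => exact ⟨[(_, _, 0)], isWalk_singleton h⟩
  | tail _ h ih =>
    obtain ⟨p, hp⟩ := ih
    exact ⟨p ++ [(_, _, 0)], hp.append (isWalk_singleton h)⟩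

noncomputable def walkBetween (G : DG) (a b : ℕ) : List Arc :=
  if h : G.SReaches a b then (exists_isWalk_of_sreaches h).choose else []

lemma isWalk_walkBetween (h : G.SReaches a b) : G.IsWalk (G.walkBetween a b) a b := by
  rw [walkBetween, dif_pos h]
  exact (exists_isWalk_of_sreaches h).choose_spec

lemma IsWalk.exists_prepend_of_reaches {p : List Arc} (hp : G.IsWalk p a b) (h : G.Reaches c a) :
    ∃ q, G.IsWalk (q ++ p) c b := by
  rcases h.cases_head with rfl | ⟨d, hcd, hda⟩
  · exact ⟨[], hp⟩
  · obtain ⟨q, hq⟩ := exists_isWalk_of_sreaches (Relation.TransGen.head' hcd hda)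
    exact ⟨q, hq.append hp⟩

lemma IsWalk.exists_append_of_reaches {p : List Arc} (hp : G.IsWalk p a b) (h : G.Reaches b c) :
    ∃ q, G.IsWalk (p ++ q) a c := by
  rcases h.cases_head with rfl | ⟨d, hbd, hdc⟩
  · exact ⟨[], by simpa using hp⟩
  · obtain ⟨q, hq⟩ := exists_isWalk_of_sreaches (Relation.TransGen.head' hbd hdc)
    exact ⟨q, hp.append hq⟩

lemma acyclic_of_adj_lt {ψ : ℕ → ℕ} (h : ∀ a b, G.Adj a b → ψ a < ψ b) : G.Acyclic :=
  fun v hv => lt_irrefl (ψ v) (by simpa [Relation.transGen_eq_self] using hv.lift ψ h)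

noncomputable def rank (G : DG) (v : ℕ) : ℕ := (G.verts.filter (G.SReaches · v)).card

lemma rank_lt_rank_of_adj (hs : G.Supported) (ha : G.Acyclic) (h : G.Adj u v) :
    G.rank u < G.rank v := by
  refine Finset.card_lt_card ⟨fun w hw => ?_, fun hsub => ?_⟩
  · simp only [Finset.mem_filter] at hw ⊢
    exact ⟨hw.1, hw.2.tail h⟩
  · have := hsub (Finset.mem_filter.mpr ⟨(hs u v h).1, .single h⟩)
    exact ha u (Finset.mem_filter.mp this).2

lemma exists_source_reaches (hs : G.Supported) (ha : G.Acyclic) (hv : v ∈ G.verts) :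
    ∃ r, G.inDeg r = 0 ∧ G.Reaches r v := by
  obtain ⟨r, hr, hmin⟩ := (G.verts.filter (G.Reaches · v)).exists_min_image G.rank
    ⟨v, Finset.mem_filter.mpr ⟨hv, .refl⟩⟩
  rw [Finset.mem_filter] at hr
  refine ⟨r, by_contra fun h0 => ?_, hr.2⟩
  obtain ⟨u, hu, hur⟩ := exists_adj_parent h0
  exact (hmin u (Finset.mem_filter.mpr ⟨hu, .head hur hr.2⟩)).not_gt
    (rank_lt_rank_of_adj hs ha hur)

lemma exists_sink_reached (hs : G.Supported) (ha : G.Acyclic) (hv : v ∈ G.verts) :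
    ∃ l, G.outDeg l = 0 ∧ G.Reaches v l := by
  obtain ⟨l, hl, hmax⟩ := (G.verts.filter (G.Reaches v ·)).exists_max_image G.rank
    ⟨v, Finset.mem_filter.mpr ⟨hv, .refl⟩⟩
  rw [Finset.mem_filter] at hl
  refine ⟨l, by_contra fun h0 => ?_, hl.2⟩
  obtain ⟨u, hu, hlu⟩ := exists_adj_child h0
  exact (hmax u (Finset.mem_filter.mpr ⟨hu, .tail hl.2 hlu⟩)).not_gt
    (rank_lt_rank_of_adj hs ha hlu)

lemma IsWalk.exists_source_sink_extension {p : List Arc} (hs : G.Supported) (ha : G.Acyclic)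
    (hp : G.IsWalk p a b) :
    ∃ r l q₁ q₂, G.inDeg r = 0 ∧ G.outDeg l = 0 ∧ G.IsWalk (q₁ ++ p ++ q₂) r l := by
  obtain ⟨r, hr, hra⟩ := exists_source_reaches hs ha (hp.start_mem hs)
  obtain ⟨l, hl, hbl⟩ := exists_sink_reached hs ha (hp.end_mem hs)
  obtain ⟨q₁, hq₁⟩ := hp.exists_prepend_of_reaches hra
  obtain ⟨q₂, hq₂⟩ := hq₁.exists_append_of_reaches hbl
  exact ⟨r, l, q₁, q₂, hr, hl, hq₂⟩

@[simp]
lemma beadsOnWalk_append (p q : List Arc) :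
    G.beadsOnWalk (p ++ q) = G.beadsOnWalk p + G.beadsOnWalk q :=
  List.countP_append ..

@[simp]
lemma dupsOnWalk_append (p q : List Arc) :
    G.dupsOnWalk (p ++ q) = G.dupsOnWalk p + G.dupsOnWalk q :=
  List.countP_append ..

lemma beadsOnWalk_cons (e : Arc) (p : List Arc) :
    G.beadsOnWalk (e :: p) = G.beadsOnWalk [e] + G.beadsOnWalk p :=
  beadsOnWalk_append [e] p

lemma dupsOnWalk_cons (e : Arc) (p : List Arc) :
    G.dupsOnWalk (e :: p) = G.dupsOnWalk [e] + G.dupsOnWalk p :=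
  dupsOnWalk_append [e] p

end Walks

section Forests

variable (hs : G.Supported) (hin : ∀ v ∈ G.verts, G.inDeg v ≤ 1)
include hs hin

lemma eq_of_adj_of_adj (h : G.Adj u w) (h' : G.Adj v w) : u = v := by
  by_contra hne
  have := mult_add_mult_le_inDeg (v := w) hs hne
  have := hin w (hs u w h).2
  simp only [Adj] at h h'
  omega

lemma reaches_total_of_reaches (hac : G.Reaches a c) (hbc : G.Reaches b c) :
    G.Reaches a b ∨ G.Reaches b a := by
  induction hac using Relation.ReflTransGen.head_induction_on with
  | refl => exact Or.inr hbc
  | head hadj _ ih =>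
    rcases ih with h | h
    · exact Or.inl (.head hadj h)
    · rcases h.cases_tail with rfl | ⟨m, hbm, hm⟩
      · exact Or.inl (.single hadj)
      · obtain rfl := eq_of_adj_of_adj hs hin hm hadj
        exact Or.inr hbm

lemma not_reaches_of_adj_of_adj (ha : G.Acyclic) (h : G.Adj u v) (h' : G.Adj u v')
    (hne : v ≠ v') : ¬ (G.Reaches v w ∧ G.Reaches v' w) := by
  rintro ⟨hw, hw'⟩
  wlog hvv' : G.Reaches v v' generalizing v v'
  · exact this h' h hne.symm hw' hw
      ((reaches_total_of_reaches hs hin hw hw').resolve_left hvv')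
  rcases hvv'.cases_tail with rfl | ⟨m, hvm, hm⟩
  · exact hne rfl
  · obtain rfl := eq_of_adj_of_adj hs hin hm h'
    exact ha m (.head' h hvm)

lemma isLCA_of_adj (ha : G.Acyclic) {x y y' : ℕ} (h2 : G.outDeg x = 2) (h : G.Adj x v)
    (h' : G.Adj x v') (hne : v ≠ v') (hy : G.Reaches v y) (hy' : G.Reaches v' y') :
    G.IsLCA x y y' := by
  refine ⟨.head h hy, .head h' hy', fun w hxw ⟨hwy, hwy'⟩ => ?_⟩
  obtain ⟨c, hxc, hcw⟩ := Relation.TransGen.head'_iff.mp hxw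
  rcases eq_or_eq_of_adj_of_outDeg_eq_two hs h2 h h' hne hxc with rfl | rfl
  · exact not_reaches_of_adj_of_adj hs hin ha h h' hne ⟨hcw.trans hwy', hy'⟩
  · exact not_reaches_of_adj_of_adj hs hin ha h h' hne ⟨hy, hcw.trans hwy⟩

end Forests

section Trees

variable {X : Finset ℕ} {T N : DG}

lemma IsNetwork.isRoot_of_inDeg_eq_zero (hN : G.IsNetwork X) (hv : v ∈ G.verts)
    (h0 : G.inDeg v = 0) : G.IsRoot v := by
  rcases hN.nodes v hv with h | ⟨-, h, -⟩ | ⟨-, h, -⟩ | ⟨-, h, -⟩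
  · exact h
  all_goals omega

lemma IsNetwork.isLeafNode_of_outDeg_eq_zero (hN : G.IsNetwork X) (hv : v ∈ G.verts)
    (h0 : G.outDeg v = 0) : G.IsLeafNode v := by
  rcases hN.nodes v hv with ⟨-, -, h⟩ | ⟨-, -, h⟩ | ⟨-, -, h⟩ | h
  · omega
  · omega
  · omega
  · exact h

lemma IsDupTree.inDeg_le_one (hD : G.IsDupTree X) (hv : v ∈ G.verts) : G.inDeg v ≤ 1 := by
  rcases hD.nodes v hv with ⟨-, h, -⟩ | ⟨-, h, -⟩ | ⟨-, h, -⟩ | ⟨-, h, -⟩ <;> omega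

lemma IsMulTree.exists_adj_of_not_isLeafNode (hT : T.IsMulTree X) (hx : x ∈ T.verts)
    (hnl : ¬ T.IsLeafNode x) : ∃ y, T.Adj x y := by
  have : T.outDeg x ≠ 0 := by
    rcases hT.nodes x hx with ⟨-, -, h⟩ | ⟨-, -, h⟩ | h
    · omega
    · omega
    · exact absurd h hnl
  obtain ⟨y, -, hy⟩ := exists_adj_child this
  exact ⟨y, hy⟩

lemma IsMulTree.eq_or_eq_of_adj (hT : T.IsMulTree X) (hy : T.Adj x y) (hy' : T.Adj x y')
    (hne : y ≠ y') (hw : T.Adj x w) : w = y ∨ w = y' := by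
  have := mult_add_mult_le_outDeg (u := x) hT.supported hne
  have hout : T.outDeg x = 2 := by
    rcases hT.nodes x (hT.supported x y hy).1 with ⟨-, -, h⟩ | ⟨-, -, h⟩ | ⟨-, -, h⟩ <;>
      simp only [Adj] at hy hy' <;> omega
  exact eq_or_eq_of_adj_of_outDeg_eq_two hT.supported hout hy hy' hne hw

lemma WeakEmbedding.exists_ne_arcOK {h : ℕ → ℕ} {hE : ℕ → ℕ → List Arc}
    (hw : WeakEmbedding T N h hE) (hy : T.Adj x y) (hy' : T.Adj x y') (hne : y ≠ y') :
    ∃ e e', e ≠ e' ∧ e.1 = h x ∧ e'.1 = h x ∧ N.ArcOK e ∧ N.ArcOK e' ∧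
      N.Reaches e.2.1 (h y) ∧ N.Reaches e'.2.1 (h y') := by
  obtain ⟨e, q, hq, he, heOK, hey⟩ := (hw.2.2.1 x y hy).exists_eq_cons
  obtain ⟨e', q', hq', he', he'OK, he'y⟩ := (hw.2.2.1 x y' hy').exists_eq_cons
  have hhead := hw.2.2.2 x y y' hy hy' hne
  rw [hq, hq'] at hhead
  exact ⟨e, e', fun h => hhead (by simp [h]), he, he', heOK, he'OK, hey, he'y⟩

lemma WeakEmbedding.two_le_outDeg {h : ℕ → ℕ} {hE : ℕ → ℕ → List Arc}
    (hw : WeakEmbedding T N h hE) (hs : N.Supported) (hy : T.Adj x y) (hy' : T.Adj x y')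
    (hne : y ≠ y') : 2 ≤ N.outDeg (h x) := by
  obtain ⟨e, e', hee', he, he', heOK, he'OK, -⟩ := hw.exists_ne_arcOK hy hy' hne
  exact he ▸ two_le_outDeg_of_arcOK hs heOK he'OK (he.trans he'.symm) hee'

end Trees

section Expansion

/-- Each duplication node `v` of `D` becomes the bead `(2v, 2v+1)`; every other node `v`
becomes `2v`. -/
noncomputable def expand (D : DG) : DG where
  verts := D.verts.image (fun v => 2*v) ∪
    (D.verts.filter (fun v => D.inDeg v = 1 ∧ D.outDeg v = 1)).image (fun v => 2*v+1)
  mult := fun s t =>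
    if s % 2 = 0 then
      if D.IsDupNode (s/2) then (if t = s + 1 then 2 else 0)
      else (if t % 2 = 0 then D.mult (s/2) (t/2) else 0)
    else
      if D.IsDupNode (s/2) then (if t % 2 = 0 then D.mult (s/2) (t/2) else 0) else 0
  label := fun w => if w % 2 = 0 then D.label (w/2) else none

variable {D : DG} {X : Finset ℕ}

lemma mem_expand_verts :
    w ∈ (expand D).verts ↔
      (∃ v ∈ D.verts, w = 2*v) ∨ (∃ v, D.IsDupNode v ∧ w = 2*v+1) := by
  simp [expand, IsDupNode, eq_comm, and_assoc]

lemma expand_mult_even_even :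
    (expand D).mult (2*v) (2*w) = if D.IsDupNode v then 0 else D.mult v w := by
  simp [expand, show 2*w ≠ 2*v+1 by omega]

lemma expand_mult_even_odd :
    (expand D).mult (2*v) (2*w+1) = if D.IsDupNode v ∧ w = v then 2 else 0 := by
  by_cases hwv : w = v <;> simp [expand, hwv, Nat.add_mod]

lemma expand_mult_odd_even :
    (expand D).mult (2*v+1) (2*w) = if D.IsDupNode v then D.mult v w else 0 := by
  simp [expand, Nat.add_mod, show (2*v+1)/2 = v by omega]

lemma expand_mult_odd_odd : (expand D).mult (2*v+1) (2*w+1) = 0 := by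
  simp [expand, Nat.add_mod]

lemma expand_label_even : (expand D).label (2*v) = D.label v := by
  simp [expand]

lemma expand_label_odd : (expand D).label (2*v+1) = none := by
  simp [expand, Nat.add_mod]

lemma sum_expand_verts (f : ℕ → ℕ) :
    ∑ t ∈ (expand D).verts, f t =
      ∑ v ∈ D.verts, (f (2*v) + if D.IsDupNode v then f (2*v+1) else 0) := by
  have hdisj : Disjoint (D.verts.image (fun v => 2*v))
      ((D.verts.filter (fun v => D.inDeg v = 1 ∧ D.outDeg v = 1)).image (fun v => 2*v+1)) := by
    simp only [Finset.disjoint_left, Finset.mem_image]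
    rintro _ ⟨v, -, rfl⟩ ⟨w, -, h⟩
    omega
  rw [expand, Finset.sum_union hdisj, Finset.sum_image (fun _ _ _ _ h => by omega),
    Finset.sum_image (fun _ _ _ _ h => by omega), Finset.sum_filter, ← Finset.sum_add_distrib]
  refine Finset.sum_congr rfl fun v hv => ?_
  simp [IsDupNode, hv]

lemma expand_outDeg_even : (expand D).outDeg (2*v) = if D.IsDupNode v then 2 else D.outDeg v := by
  by_cases hv : D.IsDupNode v
  · rw [if_pos hv, outDeg, sum_expand_verts]
    calc _ = ∑ w ∈ D.verts, if w = v then 2 else 0 := Finset.sum_congr rfl fun w _ => by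
          by_cases hw : w = v <;> simp [expand_mult_even_even, expand_mult_even_odd, hv, hw]
      _ = 2 := by simp [hv.1]
  · simp [outDeg, sum_expand_verts, expand_mult_even_even, expand_mult_even_odd, hv]

lemma expand_outDeg_odd : (expand D).outDeg (2*v+1) = if D.IsDupNode v then D.outDeg v else 0 := by
  by_cases hv : D.IsDupNode v <;>
    simp [outDeg, sum_expand_verts, expand_mult_odd_even, expand_mult_odd_odd, hv]

lemma expand_inDeg_even : (expand D).inDeg (2*w) = D.inDeg w := by
  simp only [inDeg, sum_expand_verts, expand_mult_even_even, expand_mult_odd_even]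
  refine Finset.sum_congr rfl fun v _ => ?_
  split_ifs <;> simp

lemma expand_inDeg_odd : (expand D).inDeg (2*w+1) = if D.IsDupNode w then 2 else 0 := by
  rw [inDeg, sum_expand_verts]
  calc _ = ∑ v ∈ D.verts, if v = w ∧ D.IsDupNode w then 2 else 0 :=
        Finset.sum_congr rfl fun v _ => by
        by_cases hv : v = w
        · simp [expand_mult_even_odd, expand_mult_odd_odd, hv]
        · simp [expand_mult_even_odd, expand_mult_odd_odd, hv, Ne.symm hv]
    _ = if D.IsDupNode w then 2 else 0 := by
        by_cases hw : D.IsDupNode w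
        · simp [hw, hw.1]
        · simp [hw]

lemma expand_arcOK_cases {e : Arc} (he : (expand D).ArcOK e) :
    (∃ v j, D.IsDupNode v ∧ j < 2 ∧ e = (2*v, 2*v+1, j)) ∨
    (∃ v w i, D.ArcOK (v, w, i) ∧ e = (2*v, 2*w, i)) ∨
    (∃ v w i, D.ArcOK (v, w, i) ∧ D.IsDupNode v ∧ e = (2*v+1, 2*w, i)) := by
  obtain ⟨s, t, i⟩ := e
  simp only [ArcOK] at he
  obtain ⟨v, rfl | rfl⟩ := Nat.even_or_odd' s <;>
    obtain ⟨w, rfl | rfl⟩ := Nat.even_or_odd' t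
  · rw [expand_mult_even_even] at he
    split_ifs at he with hv
    · omega
    · exact Or.inr (Or.inl ⟨v, w, i, he, rfl⟩)
  · rw [expand_mult_even_odd] at he
    split_ifs at he with hv
    · obtain ⟨hv, rfl⟩ := hv
      exact Or.inl ⟨w, i, hv, he, rfl⟩
    · omega
  · rw [expand_mult_odd_even] at he
    split_ifs at he with hv
    · exact Or.inr (Or.inr ⟨v, w, i, he, hv, rfl⟩)
    · omega
  · rw [expand_mult_odd_odd] at he
    omega

lemma expand_supported (hs : D.Supported) : (expand D).Supported := by
  intro s t hst
  rcases expand_arcOK_cases (e := (s, t, 0)) hst with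
    ⟨v, j, hv, -, he⟩ | ⟨v, w, i, hvw, he⟩ | ⟨v, w, i, hvw, hv, he⟩ <;>
    simp only [Prod.mk.injEq] at he <;> obtain ⟨rfl, rfl, -⟩ := he <;>
    simp only [mem_expand_verts]
  · exact ⟨Or.inl ⟨v, hv.1, rfl⟩, Or.inr ⟨v, hv, rfl⟩⟩
  · have := hs v w hvw.adj
    exact ⟨Or.inl ⟨v, this.1, rfl⟩, Or.inl ⟨w, this.2, rfl⟩⟩
  · exact ⟨Or.inr ⟨v, hv, rfl⟩, Or.inl ⟨w, (hs v w hvw.adj).2, rfl⟩⟩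

lemma expand_acyclic (hs : D.Supported) (ha : D.Acyclic) : (expand D).Acyclic := by
  refine acyclic_of_adj_lt (ψ := fun w => 2 * D.rank (w/2) + w % 2) fun s t hst => ?_
  rcases expand_arcOK_cases (e := (s, t, 0)) hst with
    ⟨v, j, hv, -, he⟩ | ⟨v, w, i, hvw, he⟩ | ⟨v, w, i, hvw, hv, he⟩ <;>
    simp only [Prod.mk.injEq] at he <;> obtain ⟨rfl, rfl, -⟩ := he
  · simp [show (2*v+1)/2 = v by omega]
  · have := rank_lt_rank_of_adj hs ha hvw.adj
    simp at this ⊢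
    omega
  · have := rank_lt_rank_of_adj hs ha hvw.adj
    simp [show (2*v+1)/2 = v by omega] at this ⊢
    omega

lemma not_isDupNode_of_inDeg_ne_one (h : D.inDeg v ≠ 1) : ¬ D.IsDupNode v :=
  fun hv => h hv.2.1

lemma not_isDupNode_of_outDeg_ne_one (h : D.outDeg v ≠ 1) : ¬ D.IsDupNode v :=
  fun hv => h hv.2.2

lemma expand_isRoot_iff : (expand D).IsRoot w ↔ ∃ r, D.IsRoot r ∧ w = 2*r := by
  constructor
  · rintro ⟨hw, hin, hout⟩
    rcases mem_expand_verts.mp hw with ⟨v, hv, rfl⟩ | ⟨v, hv, rfl⟩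
    · rw [expand_inDeg_even] at hin
      rw [expand_outDeg_even, if_neg (not_isDupNode_of_inDeg_ne_one (by omega))] at hout
      exact ⟨v, ⟨hv, hin, hout⟩, rfl⟩
    · rw [expand_inDeg_odd, if_pos hv] at hin
      omega
  · rintro ⟨r, ⟨hr, hin, hout⟩, rfl⟩
    refine ⟨mem_expand_verts.mpr (Or.inl ⟨r, hr, rfl⟩), by rw [expand_inDeg_even, hin], ?_⟩
    rw [expand_outDeg_even, if_neg (not_isDupNode_of_inDeg_ne_one (by omega)), hout]

lemma expand_isLeafNode_iff : (expand D).IsLeafNode w ↔ ∃ l, D.IsLeafNode l ∧ w = 2*l := by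
  constructor
  · rintro ⟨hw, hin, hout⟩
    rcases mem_expand_verts.mp hw with ⟨v, hv, rfl⟩ | ⟨v, hv, rfl⟩
    · rw [expand_inDeg_even] at hin
      have hnd : ¬ D.IsDupNode v := fun hd => by simp [expand_outDeg_even, hd] at hout
      rw [expand_outDeg_even, if_neg hnd] at hout
      exact ⟨v, ⟨hv, hin, hout⟩, rfl⟩
    · rw [expand_inDeg_odd, if_pos hv] at hin
      omega
  · rintro ⟨l, ⟨hl, hin, hout⟩, rfl⟩
    refine ⟨mem_expand_verts.mpr (Or.inl ⟨l, hl, rfl⟩), by rw [expand_inDeg_even, hin], ?_⟩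
    rw [expand_outDeg_even, if_neg (not_isDupNode_of_outDeg_ne_one (by omega)), hout]

lemma expand_nodes (hD : D.IsDupTree X) (hw : w ∈ (expand D).verts) :
    (expand D).IsRoot w ∨ (expand D).IsTreeNode w ∨ (expand D).IsRetic w ∨
      (expand D).IsLeafNode w := by
  rcases mem_expand_verts.mp hw with ⟨v, hv, rfl⟩ | ⟨v, hv, rfl⟩
  · by_cases hdup : D.IsDupNode v
    · refine Or.inr (Or.inl ⟨hw, ?_, by rw [expand_outDeg_even, if_pos hdup]⟩)
      rw [expand_inDeg_even, hdup.2.1]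
    rcases hD.nodes v hv with h | ⟨-, hin, hout⟩ | h | h
    · exact Or.inl (expand_isRoot_iff.mpr ⟨v, h, rfl⟩)
    · exact Or.inr (Or.inl ⟨hw, by rw [expand_inDeg_even, hin],
        by rw [expand_outDeg_even, if_neg hdup, hout]⟩)
    · exact absurd h hdup
    · exact Or.inr (Or.inr (Or.inr (expand_isLeafNode_iff.mpr ⟨v, h, rfl⟩)))
  · exact Or.inr (Or.inr (Or.inl ⟨hw, by rw [expand_inDeg_odd, if_pos hv],
      by rw [expand_outDeg_odd, if_pos hv, hv.2.2]⟩))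

lemma expand_isNetwork (hD : D.IsDupTree X) : (expand D).IsNetwork X where
  root := by
    obtain ⟨r, hr, hr_uniq⟩ := hD.root
    refine ⟨2*r, expand_isRoot_iff.mpr ⟨r, hr, rfl⟩, fun w hw => ?_⟩
    obtain ⟨r', hr', rfl⟩ := expand_isRoot_iff.mp hw
    rw [hr_uniq r' hr']
  nodes _ := expand_nodes hD
  acyclic := expand_acyclic hD.supported hD.acyclic
  supported := expand_supported hD.supported
  labels := by
    intro w
    rw [expand_isLeafNode_iff]
    obtain ⟨v, rfl | rfl⟩ := Nat.even_or_odd' w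
    · simp [expand_label_even, hD.labels v]
    · simp [expand_label_odd]
      omega
  labelsSub := by
    intro w x hx
    obtain ⟨v, rfl | rfl⟩ := Nat.even_or_odd' w
    · exact hD.labelsSub v x (expand_label_even ▸ hx)
    · simp [expand_label_odd] at hx
  labelsOnto := by
    intro x hx
    obtain ⟨v, hv, hv_uniq⟩ := hD.labelsOnto x hx
    refine ⟨2*v, show (expand D).label (2*v) = some x by rwa [expand_label_even],
      fun w hw => ?_⟩
    obtain ⟨u, rfl | rfl⟩ := Nat.even_or_odd' w
    · rw [hv_uniq u (by simpa [expand_label_even] using hw)]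
    · simp [expand_label_odd] at hw

lemma expand_isBeadedTree (hD : D.IsDupTree X) : (expand D).IsBeadedTree X := by
  refine ⟨expand_isNetwork hD, fun w hw hin => ?_⟩
  rcases mem_expand_verts.mp hw with ⟨v, hv, rfl⟩ | ⟨v, hv, rfl⟩
  · have := hD.inDeg_le_one hv
    rw [expand_inDeg_even] at hin
    omega
  · exact ⟨2*v, by simp [expand_mult_even_odd, hv]⟩

noncomputable def liftArc (D : DG) (j : ℕ) (e : Arc) : List Arc :=
  if D.IsDupNode e.1 then [(2*e.1, 2*e.1+1, j), (2*e.1+1, 2*e.2.1, e.2.2)]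
  else [(2*e.1, 2*e.2.1, e.2.2)]

noncomputable def liftWalk (D : DG) (j : ℕ) (p : List Arc) : List Arc := p.flatMap (liftArc D j)

lemma isWalk_liftArc {j : ℕ} {e : Arc} (hj : j < 2) (he : D.ArcOK e) :
    (expand D).IsWalk (liftArc D j e) (2*e.1) (2*e.2.1) := by
  unfold liftArc
  split_ifs with hd
  · refine isWalk_cons.mpr ⟨rfl, ?_, Or.inr (isWalk_singleton ?_)⟩
    · simpa [ArcOK, expand_mult_even_odd, hd] using hj
    · simpa [ArcOK, expand_mult_odd_even, hd] using he
  · exact isWalk_singleton (by simpa [ArcOK, expand_mult_even_even, hd] using he)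

lemma IsWalk.expand_liftWalk {j : ℕ} {p : List Arc} (hj : j < 2) (hp : D.IsWalk p a b) :
    (expand D).IsWalk (liftWalk D j p) (2*a) (2*b) := by
  induction hp using IsWalk.induction_on with
  | single e he => simpa [liftWalk] using isWalk_liftArc hj he
  | cons e p b he _ ih => exact (isWalk_liftArc hj he).append ih

lemma liftWalk_cons_head? {j : ℕ} {e : Arc} {p : List Arc} :
    (liftWalk D j (e :: p)).head? =
      some (if D.IsDupNode e.1 then (2*e.1, 2*e.1+1, j) else (2*e.1, 2*e.2.1, e.2.2)) := by
  by_cases hd : D.IsDupNode e.1 <;> simp [liftWalk, liftArc, hd]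

lemma liftWalk_head?_ne {j j' x y y' : ℕ} {p p' : List Arc} (hp : D.IsWalk p x y)
    (hp' : D.IsWalk p' x y') (hdup : D.IsDupNode x → j ≠ j')
    (hlca : ¬ D.IsDupNode x → D.IsLCA x y y') :
    (liftWalk D j p).head? ≠ (liftWalk D j' p').head? := by
  obtain ⟨e, q, rfl, rfl, he, hey⟩ := hp.exists_eq_cons
  obtain ⟨e', q', rfl, hee', he', he'y⟩ := hp'.exists_eq_cons
  rw [liftWalk_cons_head?, liftWalk_cons_head?, hee']
  by_cases hd : D.IsDupNode e.1
  · simpa [hd] using hdup hd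
  · have hc : e.2.1 ≠ e'.2.1 := fun hc =>
      (hlca hd).2.2 e.2.1 (.single he.adj) ⟨hey, hc ▸ he'y⟩
    simp [hd, hc]

/-- Selects the parallel copy of a bead used by the path to the child `v` of `u`: the two
children of `u` use different copies. -/
noncomputable def childIndex (T : DG) (u v : ℕ) : ℕ :=
  if ∃ w, T.Adj u w ∧ w < v then 1 else 0

lemma childIndex_lt_two (T : DG) (u v : ℕ) : childIndex T u v < 2 := by
  unfold childIndex
  split_ifs <;> omega

lemma IsMulTree.childIndex_ne {T : DG} {x y y' : ℕ} (hT : T.IsMulTree X) (hy : T.Adj x y)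
    (hy' : T.Adj x y') (hne : y ≠ y') : childIndex T x y ≠ childIndex T x y' := by
  wlog hlt : y < y' generalizing y y'
  · exact (this hy' hy hne.symm (by omega)).symm
  have hsmallest : ¬ ∃ w, T.Adj x w ∧ w < y := fun ⟨w, hw, hwy⟩ => by
    rcases hT.eq_or_eq_of_adj hy hy' hne hw with rfl | rfl <;> omega
  have hy'_not_smallest : ∃ w, T.Adj x w ∧ w < y' := ⟨y, hy, hlt⟩
  simp [childIndex, hsmallest, hy'_not_smallest]

lemma expand_displays {T : DG} (hs : D.Supported) (hT : T.IsMulTree X)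
    (hC : D.ConsistentWith T) : (expand D).Displays T := by
  obtain ⟨M, hleaf, hedge, hsplit⟩ := hC
  refine ⟨fun v => 2 * M v,
    fun u v => liftWalk D (childIndex T u v) (D.walkBetween (M u) (M v)), ?_, ?_, ?_, ?_⟩
  · intro v hv
    refine mem_expand_verts.mpr (Or.inl ⟨M v, ?_, rfl⟩)
    by_cases hl : T.IsLeafNode v
    · exact (hleaf v hl).1.1
    · obtain ⟨y, hy⟩ := hT.exists_adj_of_not_isLeafNode hv hl
      exact (isWalk_walkBetween (hedge v y hy)).start_mem hs
  · intro v hv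
    exact ⟨expand_isLeafNode_iff.mpr ⟨M v, (hleaf v hv).1, rfl⟩,
      by rw [expand_label_even, (hleaf v hv).2]⟩
  · intro u v huv
    exact (isWalk_walkBetween (hedge u v huv)).expand_liftWalk (childIndex_lt_two T u v)
  · intro x y y' hy hy' hne
    exact liftWalk_head?_ne (isWalk_walkBetween (hedge x y hy))
      (isWalk_walkBetween (hedge x y' hy')) (fun _ => hT.childIndex_ne hy hy' hne)
      (fun hd => (hsplit x y y' hy hy' hne).resolve_right hd)

def projectArc (e : Arc) : List Arc :=
  if e.1 % 2 = 0 ∧ e.2.1 = e.1 + 1 then [] else [(e.1/2, e.2.1/2, e.2.2)]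

def projectWalk (p : List Arc) : List Arc := p.flatMap projectArc

lemma expand_projectArc {e : Arc} (he : (expand D).ArcOK e) :
    (projectArc e = [] ∧ e.2.1/2 = e.1/2) ∨
      (projectArc e = [(e.1/2, e.2.1/2, e.2.2)] ∧ D.ArcOK (e.1/2, e.2.1/2, e.2.2)) := by
  rcases expand_arcOK_cases he with
    ⟨v, j, -, -, rfl⟩ | ⟨v, w, i, hvw, rfl⟩ | ⟨v, w, i, hvw, -, rfl⟩
  · left
    simp [projectArc]
    omega
  · right
    simp [projectArc, hvw, show 2*w ≠ 2*v+1 by omega]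
  · right
    simp [projectArc, Nat.add_mod, show (2*v+1)/2 = v by omega, hvw]

/- The parity terms: a walk of `expand D` ending at a bead bottom `2v+1` has crossed the bead
but its projection has not yet left `v`, and one starting there leaves `v` without crossing it. -/
lemma expand_beadsOnWalk_singleton_add_le (hsimple : ∀ u v, D.mult u v ≤ 1) {e : Arc}
    (he : (expand D).ArcOK e) :
    (expand D).beadsOnWalk [e] + e.1 % 2 ≤ D.dupsOnWalk (projectArc e) + e.2.1 % 2 := by
  rcases expand_arcOK_cases he with
    ⟨v, j, hv, -, rfl⟩ | ⟨v, w, i, -, rfl⟩ | ⟨v, w, i, -, hv, rfl⟩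
  · simp [beadsOnWalk, projectArc, expand_mult_even_odd, hv, Nat.add_mod]
  · have := hsimple v w
    have : (expand D).mult (2*v) (2*w) ≠ 2 := by
      rw [expand_mult_even_even]
      split_ifs <;> omega
    simp [beadsOnWalk, this]
  · have := hsimple v w
    simp [beadsOnWalk, dupsOnWalk, projectArc, expand_mult_odd_even, hv, hv.2, Nat.add_mod,
      show (2*v+1)/2 = v by omega]
    omega

lemma IsWalk.expand_beadsOnWalk_add_le (hsimple : ∀ u v, D.mult u v ≤ 1) {p : List Arc}
    (hp : (expand D).IsWalk p a b) :
    (expand D).beadsOnWalk p + a % 2 ≤ D.dupsOnWalk (projectWalk p) + b % 2 := by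
  induction hp using IsWalk.induction_on with
  | single e he => simpa [projectWalk] using expand_beadsOnWalk_singleton_add_le hsimple he
  | cons e p b he _ ih =>
    have := expand_beadsOnWalk_singleton_add_le hsimple he
    rw [beadsOnWalk_cons, projectWalk, List.flatMap_cons, dupsOnWalk_append, ← projectWalk]
    omega

lemma IsWalk.expand_projectWalk {p : List Arc} (hp : (expand D).IsWalk p a b) :
    (projectWalk p = [] ∧ b/2 = a/2) ∨ D.IsWalk (projectWalk p) (a/2) (b/2) := by
  induction hp using IsWalk.induction_on with
  | single e he =>
    rcases expand_projectArc he with h | ⟨h, he'⟩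
    · exact Or.inl (by simpa [projectWalk] using h)
    · exact Or.inr (by simpa [projectWalk, h] using isWalk_singleton he')
  | cons e p b he _ ih =>
    rw [projectWalk, List.flatMap_cons, ← projectWalk]
    rcases expand_projectArc he with ⟨h, hdiv⟩ | ⟨h, he'⟩
    · simpa [h, hdiv] using ih
    · right
      rw [h, List.singleton_append, isWalk_cons]
      refine ⟨rfl, he', ?_⟩
      rcases ih with ⟨hnil, hb⟩ | hw
      · exact Or.inl ⟨hnil, hb⟩
      · exact Or.inr hw

lemma expand_beadsOnWalk_le {d : ℕ} (hD : D.IsDupTree X)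
    (hbound : ∀ p r l, D.IsRoot r → D.IsLeafNode l → D.IsWalk p r l → D.dupsOnWalk p ≤ d)
    {p : List Arc} (hp : (expand D).IsWalk p a b) : (expand D).beadsOnWalk p ≤ d := by
  have hN := expand_isNetwork hD
  obtain ⟨r, l, q₁, q₂, hr0, hl0, hq⟩ :=
    hp.exists_source_sink_extension hN.supported hN.acyclic
  obtain ⟨r, hr, rfl⟩ :=
    expand_isRoot_iff.mp (hN.isRoot_of_inDeg_eq_zero (hq.start_mem hN.supported) hr0)
  obtain ⟨l, hl, rfl⟩ :=
    expand_isLeafNode_iff.mp (hN.isLeafNode_of_outDeg_eq_zero (hq.end_mem hN.supported) hl0)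
  have hcount := hq.expand_beadsOnWalk_add_le hD.simple
  have hdups : D.dupsOnWalk (projectWalk (q₁ ++ p ++ q₂)) ≤ d := by
    rcases hq.expand_projectWalk with ⟨hnil, -⟩ | hw
    · rw [hnil]
      exact Nat.zero_le d
    · exact hbound _ r l hr hl (by simpa using hw)
  simp only [beadsOnWalk_append, Nat.mul_mod_right] at hcount
  omega

end Expansion

section Beads

def IsBeadTop (B : DG) (u : ℕ) : Prop := ∃ v, B.mult u v = 2

def IsBeadBot (B : DG) (v : ℕ) : Prop := ∃ u, B.mult u v = 2

noncomputable def beadTop (B : DG) (v : ℕ) : ℕ := if h : B.IsBeadBot v then h.choose else v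

noncomputable def beadBot (B : DG) (u : ℕ) : ℕ := if h : B.IsBeadTop u then h.choose else u

variable {B : DG} {X : Finset ℕ}

lemma mult_beadTop (h : B.IsBeadBot v) : B.mult (B.beadTop v) v = 2 := by
  rw [beadTop, dif_pos h]
  exact h.choose_spec

lemma mult_beadBot (h : B.IsBeadTop u) : B.mult u (B.beadBot u) = 2 := by
  rw [beadBot, dif_pos h]
  exact h.choose_spec

lemma beadTop_of_not_isBeadBot (h : ¬ B.IsBeadBot v) : B.beadTop v = v := by
  rw [beadTop, dif_neg h]

lemma beadBot_of_not_isBeadTop (h : ¬ B.IsBeadTop u) : B.beadBot u = u := by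
  rw [beadBot, dif_neg h]

lemma isBeadTop_beadTop (h : B.IsBeadBot v) : B.IsBeadTop (B.beadTop v) := ⟨v, mult_beadTop h⟩

lemma isBeadBot_beadBot (h : B.IsBeadTop u) : B.IsBeadBot (B.beadBot u) := ⟨u, mult_beadBot h⟩

lemma adj_of_mult_eq_two (h : B.mult u v = 2) : B.Adj u v := by
  rw [Adj, h]
  exact two_pos

namespace IsNetwork

variable (hN : B.IsNetwork X)
include hN

lemma inDeg_le_two (hv : v ∈ B.verts) : B.inDeg v ≤ 2 := by
  rcases hN.nodes v hv with ⟨-, h, -⟩ | ⟨-, h, -⟩ | ⟨-, h, -⟩ | ⟨-, h, -⟩ <;> omega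

lemma outDeg_le_two (hv : v ∈ B.verts) : B.outDeg v ≤ 2 := by
  rcases hN.nodes v hv with ⟨-, -, h⟩ | ⟨-, -, h⟩ | ⟨-, -, h⟩ | ⟨-, -, h⟩ <;> omega

lemma mult_eq_two_of_two_le (h : 2 ≤ B.mult u v) : B.mult u v = 2 := by
  have := mult_le_inDeg (u := u) (v := v) hN.supported
  have := hN.inDeg_le_two (hN.supported u v (by rw [Adj]; omega)).2
  omega

lemma mult_le_one_of_not_isBeadTop (h : ¬ B.IsBeadTop u) : B.mult u v ≤ 1 := by
  by_contra! h2
  exact h ⟨v, hN.mult_eq_two_of_two_le h2⟩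

lemma isRetic_of_isBeadBot (h : B.IsBeadBot v) : B.IsRetic v := by
  obtain ⟨u, hu⟩ := h
  have hv := (hN.supported u v (adj_of_mult_eq_two hu)).2
  have := mult_le_inDeg (u := u) (v := v) hN.supported
  rcases hN.nodes v hv with ⟨-, h, -⟩ | ⟨-, h, -⟩ | h | ⟨-, h, -⟩
  · omega
  · omega
  · exact h
  · omega

lemma isTreeNode_of_isBeadTop (h : B.IsBeadTop u) : B.IsTreeNode u := by
  obtain ⟨v, hv⟩ := h
  have hu := (hN.supported u v (adj_of_mult_eq_two hv)).1
  have := mult_le_outDeg (u := u) (v := v) hN.supported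
  rcases hN.nodes u hu with ⟨-, -, h⟩ | h | ⟨-, -, h⟩ | ⟨-, -, h⟩
  · omega
  · exact h
  · omega
  · omega

lemma not_isBeadTop_of_isBeadBot (h : B.IsBeadBot v) : ¬ B.IsBeadTop v := fun ht => by
  have := (hN.isRetic_of_isBeadBot h).2.2
  have := (hN.isTreeNode_of_isBeadTop ht).2.2
  omega

lemma not_isBeadTop_beadBot : ¬ B.IsBeadTop (B.beadBot u) := by
  by_cases hu : B.IsBeadTop u
  · exact hN.not_isBeadTop_of_isBeadBot (isBeadBot_beadBot hu)
  · rwa [beadBot_of_not_isBeadTop hu]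

lemma eq_beadTop_of_adj (hv : B.IsBeadBot v) (h : B.Adj u v) : u = B.beadTop v := by
  by_contra hne
  have := mult_add_mult_le_inDeg (v := v) hN.supported hne
  have := (hN.isRetic_of_isBeadBot hv).2.1
  have := mult_beadTop hv
  simp only [Adj] at h
  omega

lemma eq_beadBot_of_adj (hu : B.IsBeadTop u) (h : B.Adj u v) : v = B.beadBot u := by
  by_contra hne
  have := mult_add_mult_le_outDeg (u := u) hN.supported hne
  have := (hN.isTreeNode_of_isBeadTop hu).2.2
  have := mult_beadBot hu
  simp only [Adj] at h
  omega

lemma beadTop_beadBot (hu : B.IsBeadTop u) : B.beadTop (B.beadBot u) = u :=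
  (hN.eq_beadTop_of_adj (isBeadBot_beadBot hu) (adj_of_mult_eq_two (mult_beadBot hu))).symm

lemma beadBot_beadTop (hv : B.IsBeadBot v) : B.beadBot (B.beadTop v) = v :=
  (hN.eq_beadBot_of_adj (isBeadTop_beadTop hv) (adj_of_mult_eq_two (mult_beadTop hv))).symm

lemma eq_or_of_beadBot_eq (h : B.beadBot u = B.beadBot v) :
    u = v ∨ (B.IsBeadTop u ∧ v = B.beadBot u) ∨ (B.IsBeadTop v ∧ u = B.beadBot v) := by
  by_cases hu : B.IsBeadTop u <;> by_cases hv : B.IsBeadTop v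
  · exact Or.inl (by rw [← hN.beadTop_beadBot hu, ← hN.beadTop_beadBot hv, h])
  · rw [beadBot_of_not_isBeadTop hv] at h
    exact Or.inr (Or.inl ⟨hu, h.symm⟩)
  · rw [beadBot_of_not_isBeadTop hu] at h
    exact Or.inr (Or.inr ⟨hv, h⟩)
  · rw [beadBot_of_not_isBeadTop hu, beadBot_of_not_isBeadTop hv] at h
    exact Or.inl h

lemma isBeadBot_of_adj (hu : B.IsBeadTop u) (h : B.Adj u v) : B.IsBeadBot v :=
  hN.eq_beadBot_of_adj hu h ▸ isBeadBot_beadBot hu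

lemma not_isBeadBot_beadTop : ¬ B.IsBeadBot (B.beadTop v) := by
  by_cases hv : B.IsBeadBot v
  · exact fun hb => hN.not_isBeadTop_of_isBeadBot hb (isBeadTop_beadTop hv)
  · rwa [beadTop_of_not_isBeadBot hv]

lemma beadBot_beadTop_of_not_isBeadTop (hv : ¬ B.IsBeadTop v) : B.beadBot (B.beadTop v) = v := by
  by_cases hb : B.IsBeadBot v
  · exact hN.beadBot_beadTop hb
  · rw [beadTop_of_not_isBeadBot hb, beadBot_of_not_isBeadTop hv]

lemma beadTop_beadBot_of_not_isBeadBot (hu : ¬ B.IsBeadBot u) : B.beadTop (B.beadBot u) = u := by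
  by_cases ht : B.IsBeadTop u
  · exact hN.beadTop_beadBot ht
  · rw [beadBot_of_not_isBeadTop ht, beadTop_of_not_isBeadBot hu]

lemma beadTop_mem (hv : v ∈ B.verts) : B.beadTop v ∈ B.verts := by
  by_cases hb : B.IsBeadBot v
  · exact (hN.supported _ _ (adj_of_mult_eq_two (mult_beadTop hb))).1
  · rwa [beadTop_of_not_isBeadBot hb]

lemma beadBot_mem (hu : u ∈ B.verts) : B.beadBot u ∈ B.verts := by
  by_cases ht : B.IsBeadTop u
  · exact (hN.supported _ _ (adj_of_mult_eq_two (mult_beadBot ht))).2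
  · rwa [beadBot_of_not_isBeadTop ht]

end IsNetwork

end Beads

section Contraction

/-- Each bead `(u, v)` is contracted to its bottom `v`: the arc into `u` is redirected to `v`. -/
noncomputable def contract (B : DG) : DG where
  verts := B.verts.filter (fun v => ¬ B.IsBeadTop v)
  mult := fun a b => if B.IsBeadTop a ∨ B.IsBeadTop b then 0 else B.mult a (B.beadTop b)
  label := fun v => if B.IsBeadTop v then none else B.label v

variable {B : DG} {X : Finset ℕ}

lemma mem_contract_verts : v ∈ (contract B).verts ↔ v ∈ B.verts ∧ ¬ B.IsBeadTop v :=
  Finset.mem_filter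

lemma contract_mult (ha : ¬ B.IsBeadTop a) (hb : ¬ B.IsBeadTop b) :
    (contract B).mult a b = B.mult a (B.beadTop b) := by
  simp [contract, ha, hb]

lemma contract_adj_iff :
    (contract B).Adj a b ↔ ¬ B.IsBeadTop a ∧ ¬ B.IsBeadTop b ∧ B.Adj a (B.beadTop b) := by
  by_cases ha : B.IsBeadTop a <;> by_cases hb : B.IsBeadTop b <;> simp [Adj, contract, ha, hb]

lemma contract_label (hv : ¬ B.IsBeadTop v) : (contract B).label v = B.label v := by
  simp [contract, hv]

lemma contract_label_of_isBeadTop (hv : B.IsBeadTop v) : (contract B).label v = none := by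
  simp [contract, hv]

lemma sreaches_of_contract_adj (h : (contract B).Adj a b) : B.SReaches a b := by
  obtain ⟨-, -, hab⟩ := contract_adj_iff.mp h
  by_cases hb : B.IsBeadBot b
  · exact .tail (.single hab) (adj_of_mult_eq_two (mult_beadTop hb))
  · exact .single (beadTop_of_not_isBeadBot hb ▸ hab)

namespace IsNetwork

variable (hN : B.IsNetwork X)
include hN

lemma contract_inDeg (hb : ¬ B.IsBeadTop b) : (contract B).inDeg b = B.inDeg (B.beadTop b) := by
  calc (contract B).inDeg b
      = ∑ a ∈ B.verts.filter (fun v => ¬ B.IsBeadTop v), B.mult a (B.beadTop b) :=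
        Finset.sum_congr rfl fun a ha => contract_mult (Finset.mem_filter.mp ha).2 hb
    _ = B.inDeg (B.beadTop b) := Finset.sum_filter_of_ne fun a _ h ha =>
        hN.not_isBeadBot_beadTop (hN.isBeadBot_of_adj ha (Nat.pos_of_ne_zero h))

lemma contract_outDeg (ha : ¬ B.IsBeadTop a) : (contract B).outDeg a = B.outDeg a := by
  calc (contract B).outDeg a
      = ∑ t ∈ B.verts.filter (fun v => ¬ B.IsBeadTop v), B.mult a (B.beadTop t) :=
        Finset.sum_congr rfl fun t ht => contract_mult ha (Finset.mem_filter.mp ht).2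
    _ = ∑ s ∈ B.verts.filter (fun v => ¬ B.IsBeadBot v), B.mult a s := by
        refine Finset.sum_nbij' B.beadTop B.beadBot ?_ ?_ ?_ ?_ (fun _ _ => rfl) <;>
          simp only [Finset.mem_filter]
        · exact fun t ht => ⟨hN.beadTop_mem ht.1, hN.not_isBeadBot_beadTop⟩
        · exact fun s hs => ⟨hN.beadBot_mem hs.1, hN.not_isBeadTop_beadBot⟩
        · exact fun t ht => hN.beadBot_beadTop_of_not_isBeadTop ht.2
        · exact fun s hs => hN.beadTop_beadBot_of_not_isBeadBot hs.2
    _ = B.outDeg a := Finset.sum_filter_of_ne fun s _ h hs =>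
        ha (hN.eq_beadTop_of_adj hs (Nat.pos_of_ne_zero h) ▸ isBeadTop_beadTop hs)

lemma contract_inDeg_of_isBeadBot (hv : B.IsBeadBot v) : (contract B).inDeg v = 1 := by
  rw [hN.contract_inDeg (hN.not_isBeadTop_of_isBeadBot hv),
    (hN.isTreeNode_of_isBeadTop (isBeadTop_beadTop hv)).2.1]

lemma contract_inDeg_of_not_isBeadBot (ht : ¬ B.IsBeadTop v) (hb : ¬ B.IsBeadBot v) :
    (contract B).inDeg v = B.inDeg v := by
  rw [hN.contract_inDeg ht, beadTop_of_not_isBeadBot hb]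

lemma not_isBeadBot_of_inDeg_ne_two (h : B.inDeg v ≠ 2) : ¬ B.IsBeadBot v :=
  fun hb => h (hN.isRetic_of_isBeadBot hb).2.1

lemma not_isBeadTop_of_outDeg_ne_two (h : B.outDeg v ≠ 2) : ¬ B.IsBeadTop v :=
  fun ht => h (hN.isTreeNode_of_isBeadTop ht).2.2

lemma contract_supported : (contract B).Supported := by
  intro a b hab
  obtain ⟨ha, hb, habB⟩ := contract_adj_iff.mp hab
  refine ⟨mem_contract_verts.mpr ⟨(hN.supported _ _ habB).1, ha⟩,
    mem_contract_verts.mpr ⟨?_, hb⟩⟩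
  by_cases hbb : B.IsBeadBot b
  · exact (hN.supported _ _ (adj_of_mult_eq_two (mult_beadTop hbb))).2
  · exact beadTop_of_not_isBeadBot hbb ▸ (hN.supported _ _ habB).2

lemma contract_acyclic : (contract B).Acyclic := fun v hv =>
  hN.acyclic v (Relation.TransGen.closed (fun _ _ h => sreaches_of_contract_adj h) _ _ hv)

lemma contract_mult_le_one : (contract B).mult a b ≤ 1 := by
  by_cases h : B.IsBeadTop a ∨ B.IsBeadTop b
  · simp [contract, h]
  · simp only [contract, if_neg h]
    exact hN.mult_le_one_of_not_isBeadTop (not_or.mp h).1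

lemma contract_isRoot_iff : (contract B).IsRoot v ↔ B.IsRoot v := by
  constructor
  · rintro ⟨hv, hin, hout⟩
    obtain ⟨hvB, ht⟩ := mem_contract_verts.mp hv
    have hb : ¬ B.IsBeadBot v := fun hb => by simp [hN.contract_inDeg_of_isBeadBot hb] at hin
    rw [hN.contract_inDeg_of_not_isBeadBot ht hb] at hin
    exact ⟨hvB, hin, hN.contract_outDeg ht ▸ hout⟩
  · rintro ⟨hv, hin, hout⟩
    have ht := hN.not_isBeadTop_of_outDeg_ne_two (v := v) (by omega)
    have hb := hN.not_isBeadBot_of_inDeg_ne_two (v := v) (by omega)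
    exact ⟨mem_contract_verts.mpr ⟨hv, ht⟩,
      by rw [hN.contract_inDeg_of_not_isBeadBot ht hb, hin], by rw [hN.contract_outDeg ht, hout]⟩

lemma contract_isLeafNode_iff : (contract B).IsLeafNode v ↔ B.IsLeafNode v := by
  constructor
  · rintro ⟨hv, hin, hout⟩
    obtain ⟨hvB, ht⟩ := mem_contract_verts.mp hv
    rw [hN.contract_outDeg ht] at hout
    have hb : ¬ B.IsBeadBot v := fun hb => by
      have := (hN.isRetic_of_isBeadBot hb).2.2
      omega
    rw [hN.contract_inDeg_of_not_isBeadBot ht hb] at hin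
    exact ⟨hvB, hin, hout⟩
  · rintro ⟨hv, hin, hout⟩
    have ht := hN.not_isBeadTop_of_outDeg_ne_two (v := v) (by omega)
    have hb := hN.not_isBeadBot_of_inDeg_ne_two (v := v) (by omega)
    exact ⟨mem_contract_verts.mpr ⟨hv, ht⟩,
      by rw [hN.contract_inDeg_of_not_isBeadBot ht hb, hin], by rw [hN.contract_outDeg ht, hout]⟩

lemma contract_isDupNode_of_isBeadBot (hv : B.IsBeadBot v) : (contract B).IsDupNode v := by
  have ht := hN.not_isBeadTop_of_isBeadBot hv
  exact ⟨mem_contract_verts.mpr ⟨(hN.isRetic_of_isBeadBot hv).1, ht⟩,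
    hN.contract_inDeg_of_isBeadBot hv,
    by rw [hN.contract_outDeg ht, (hN.isRetic_of_isBeadBot hv).2.2]⟩

lemma contract_dupDegrees_iff (hv : v ∈ (contract B).verts) :
    ((contract B).inDeg v = 1 ∧ (contract B).outDeg v = 1) ↔ B.IsBeadBot v := by
  obtain ⟨hvB, ht⟩ := mem_contract_verts.mp hv
  refine ⟨fun ⟨hin, hout⟩ => by_contra fun hb => ?_,
    fun hb => (hN.contract_isDupNode_of_isBeadBot hb).2⟩
  rw [hN.contract_inDeg_of_not_isBeadBot ht hb] at hin
  rw [hN.contract_outDeg ht] at hout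
  rcases hN.nodes v hvB with ⟨-, h, -⟩ | ⟨-, -, h⟩ | ⟨-, h, -⟩ | ⟨-, -, h⟩ <;> omega

end IsNetwork

lemma IsBeadedTree.contract_nodes (hB : B.IsBeadedTree X) (hv : v ∈ (contract B).verts) :
    (contract B).IsRoot v ∨ (contract B).IsTreeNode v ∨ (contract B).IsDupNode v ∨
      (contract B).IsLeafNode v := by
  obtain ⟨hvB, ht⟩ := mem_contract_verts.mp hv
  by_cases hb : B.IsBeadBot v
  · exact Or.inr (Or.inr (Or.inl (hB.1.contract_isDupNode_of_isBeadBot hb)))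
  rcases hB.1.nodes v hvB with h | ⟨-, hin, hout⟩ | ⟨-, hin, -⟩ | h
  · exact Or.inl (hB.1.contract_isRoot_iff.mpr h)
  · exact Or.inr (Or.inl ⟨hv, by rw [hB.1.contract_inDeg_of_not_isBeadBot ht hb, hin],
      by rw [hB.1.contract_outDeg ht, hout]⟩)
  · exact absurd (hB.2 v hvB hin) hb
  · exact Or.inr (Or.inr (Or.inr (hB.1.contract_isLeafNode_iff.mpr h)))

lemma IsBeadedTree.contract_isDupTree (hB : B.IsBeadedTree X) : (contract B).IsDupTree X where
  root := by
    obtain ⟨r, hr, hr_uniq⟩ := hB.1.root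
    exact ⟨r, hB.1.contract_isRoot_iff.mpr hr,
      fun w hw => hr_uniq w (hB.1.contract_isRoot_iff.mp hw)⟩
  nodes _ := hB.contract_nodes
  acyclic := hB.1.contract_acyclic
  simple := fun _ _ => hB.1.contract_mult_le_one
  supported := hB.1.contract_supported
  labels := by
    intro v
    rw [hB.1.contract_isLeafNode_iff]
    by_cases ht : B.IsBeadTop v
    · simp only [contract_label_of_isBeadTop ht, reduceCtorEq, exists_false, false_iff]
      exact fun hl => by have := (hB.1.isTreeNode_of_isBeadTop ht).2.2; have := hl.2.2; omega
    · rw [contract_label ht]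
      exact hB.1.labels v
  labelsSub := by
    intro v x hx
    by_cases ht : B.IsBeadTop v
    · simp [contract_label_of_isBeadTop ht] at hx
    · exact hB.1.labelsSub v x (contract_label ht ▸ hx)
  labelsOnto := by
    intro x hx
    obtain ⟨v, hv, hv_uniq⟩ := hB.1.labelsOnto x hx
    have ht : ¬ B.IsBeadTop v := hB.1.not_isBeadTop_of_outDeg_ne_two
      (by rw [((hB.1.labels v).mp ⟨x, hv⟩).2.2]; omega)
    refine ⟨v, (contract_label ht).trans hv, fun w hw => hv_uniq w ?_⟩
    by_cases htw : B.IsBeadTop w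
    · simp [contract_label_of_isBeadTop htw] at hw
    · simpa [contract_label htw] using hw

namespace IsNetwork

variable (hN : B.IsNetwork X)
include hN

lemma not_isBeadBot_of_adj (hx : ¬ B.IsBeadTop x) (h : B.Adj x y) : ¬ B.IsBeadBot y :=
  fun hy => hx (hN.eq_beadTop_of_adj hy h ▸ isBeadTop_beadTop hy)

lemma contract_adj_beadBot (hx : ¬ B.IsBeadTop x) (h : B.Adj x y) :
    (contract B).Adj x (B.beadBot y) := by
  refine contract_adj_iff.mpr ⟨hx, hN.not_isBeadTop_beadBot, ?_⟩
  rwa [hN.beadTop_beadBot_of_not_isBeadBot (hN.not_isBeadBot_of_adj hx h)]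

lemma contract_reaches_beadBot (h : B.Reaches x y) :
    (contract B).Reaches (B.beadBot x) (B.beadBot y) := by
  induction h with
  | refl => exact .refl
  | @tail y z _ hyz ih =>
    by_cases hy : B.IsBeadTop y
    · have hz : z = B.beadBot y := hN.eq_beadBot_of_adj hy hyz
      rwa [hz, beadBot_of_not_isBeadTop (hN.not_isBeadTop_beadBot (u := y))]
    · have := hN.contract_adj_beadBot hy hyz
      rw [← beadBot_of_not_isBeadTop hy] at this
      exact ih.tail this

lemma beadBot_ne_of_sreaches (h : B.SReaches x y) (hxy : ¬ (B.IsBeadTop x ∧ y = B.beadBot x)) :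
    B.beadBot x ≠ B.beadBot y := by
  intro heq
  rcases hN.eq_or_of_beadBot_eq heq with rfl | hxy' | ⟨hy, rfl⟩
  · exact hN.acyclic x h
  · exact hxy hxy'
  · exact hN.acyclic y (.head (adj_of_mult_eq_two (mult_beadBot hy)) h)

lemma beadBot_ne_of_arcOK (hx : ¬ B.IsBeadTop x) {e e' : Arc} (he : B.ArcOK e)
    (he' : B.ArcOK e') (hex : e.1 = x) (he'x : e'.1 = x) (hne : e ≠ e') :
    B.beadBot e.2.1 ≠ B.beadBot e'.2.1 := by
  have hc : e.2.1 ≠ e'.2.1 := by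
    obtain ⟨_, c, i⟩ := e
    obtain ⟨_, c', i'⟩ := e'
    rintro rfl
    simp only [ArcOK] at he he' hex he'x
    subst hex he'x
    have := hN.mult_le_one_of_not_isBeadTop (v := c) hx
    exact hne (by simp only [Prod.mk.injEq, true_and]; omega)
  intro heq
  rcases hN.eq_or_of_beadBot_eq heq with h | ⟨ht, h⟩ | ⟨ht, h⟩
  · exact hc h
  · exact hN.not_isBeadBot_of_adj hx (he'x ▸ he'.adj) (h ▸ isBeadBot_beadBot ht)
  · exact hN.not_isBeadBot_of_adj hx (hex ▸ he.adj) (h ▸ isBeadBot_beadBot ht)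

end IsNetwork

variable {T : DG} {h : ℕ → ℕ} {hE : ℕ → ℕ → List Arc}

lemma WeakEmbedding.contract_sreaches_beadBot (hN : B.IsNetwork X) (hT : T.IsMulTree X)
    (hw : WeakEmbedding T B h hE) (huv : T.Adj u v) :
    (contract B).SReaches (B.beadBot (h u)) (B.beadBot (h v)) := by
  have hp := (hw.2.2.1 u v huv).sreaches
  refine (Relation.reflTransGen_iff_eq_or_transGen.mp
    (hN.contract_reaches_beadBot hp.to_reflTransGen)).resolve_left
    (hN.beadBot_ne_of_sreaches hp ?_).symm
  rintro ⟨hu, hv⟩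
  have hout := (hN.isRetic_of_isBeadBot (hv ▸ isBeadBot_beadBot hu)).2.2
  rcases hT.nodes v (hT.supported u v huv).2 with ⟨-, hin, -⟩ | ⟨-, -, htree⟩ | hleaf
  · have := mult_le_inDeg (u := u) (v := v) hT.supported
    simp only [Adj] at huv
    omega
  · obtain ⟨y, y', hne, hy, hy'⟩ := exists_ne_adj_of_outDeg_eq_two hT.simple htree
    have := hw.two_le_outDeg hN.supported hy hy' hne
    omega
  · have := (hw.2.1 v hleaf).1.2.2
    omega

lemma WeakEmbedding.contract_isLCA_or_isDupNode (hB : B.IsBeadedTree X)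
    (hw : WeakEmbedding T B h hE) (hy : T.Adj x y) (hy' : T.Adj x y') (hne : y ≠ y') :
    (contract B).IsLCA (B.beadBot (h x)) (B.beadBot (h y)) (B.beadBot (h y')) ∨
      (contract B).IsDupNode (B.beadBot (h x)) := by
  by_cases hx : B.IsBeadTop (h x)
  · exact Or.inr (hB.1.contract_isDupNode_of_isBeadBot (isBeadBot_beadBot hx))
  left
  rw [beadBot_of_not_isBeadTop hx]
  obtain ⟨e, e', hee', he, he', heOK, he'OK, hey, he'y'⟩ := hw.exists_ne_arcOK hy hy' hne
  have hD := hB.contract_isDupTree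
  have hout : (contract B).outDeg (h x) = 2 := by
    rw [hB.1.contract_outDeg hx]
    exact le_antisymm (hB.1.outDeg_le_two (hB.1.supported _ _ (he ▸ heOK.adj)).1)
      (hw.two_le_outDeg hB.1.supported hy hy' hne)
  exact isLCA_of_adj hD.supported (fun v hv => hD.inDeg_le_one hv) hD.acyclic hout
    (hB.1.contract_adj_beadBot hx (he ▸ heOK.adj))
    (hB.1.contract_adj_beadBot hx (he' ▸ he'OK.adj))
    (hB.1.beadBot_ne_of_arcOK hx heOK he'OK he he' hee')
    (hB.1.contract_reaches_beadBot hey) (hB.1.contract_reaches_beadBot he'y')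

lemma IsBeadedTree.contract_consistentWith (hB : B.IsBeadedTree X) (hT : T.IsMulTree X)
    (hdisp : B.Displays T) : (contract B).ConsistentWith T := by
  obtain ⟨h, hE, hw⟩ := hdisp
  refine ⟨fun v => B.beadBot (h v), fun v hv => ?_, fun u v huv => ?_,
    fun x y y' hy hy' hne => hw.contract_isLCA_or_isDupNode hB hy hy' hne⟩
  · obtain ⟨hleaf, hlabel⟩ := hw.2.1 v hv
    have ht := hB.1.not_isBeadTop_of_outDeg_ne_two (v := h v) (by rw [hleaf.2.2]; omega)
    dsimp only
    rw [beadBot_of_not_isBeadTop ht]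
    exact ⟨hB.1.contract_isLeafNode_iff.mpr hleaf, (contract_label ht).trans hlabel⟩
  · exact hw.contract_sreaches_beadBot hB.1 hT huv

lemma contract_arcOK {e : Arc} (he : (contract B).ArcOK e) :
    ¬ B.IsBeadTop e.1 ∧ ¬ B.IsBeadTop e.2.1 ∧ B.ArcOK (e.1, B.beadTop e.2.1, e.2.2) := by
  obtain ⟨h1, h2, -⟩ := contract_adj_iff.mp he.adj
  refine ⟨h1, h2, ?_⟩
  simpa [ArcOK, contract_mult h1 h2] using he

noncomputable def uncontractArc (B : DG) (e : Arc) : List Arc :=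
  if B.IsBeadBot e.2.1 then [(e.1, B.beadTop e.2.1, e.2.2), (B.beadTop e.2.1, e.2.1, 0)] else [e]

noncomputable def uncontractWalk (B : DG) (p : List Arc) : List Arc := p.flatMap (uncontractArc B)

lemma isWalk_uncontractArc {e : Arc} (he : (contract B).ArcOK e) :
    B.IsWalk (uncontractArc B e) e.1 e.2.1 := by
  obtain ⟨-, -, heB⟩ := contract_arcOK he
  unfold uncontractArc
  split_ifs with hb
  · refine isWalk_cons.mpr ⟨rfl, heB, Or.inr (isWalk_singleton ?_)⟩
    simp [ArcOK, mult_beadTop hb]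
  · simpa [beadTop_of_not_isBeadBot hb] using isWalk_singleton heB

lemma IsWalk.uncontract {p : List Arc} (hp : (contract B).IsWalk p a b) :
    B.IsWalk (uncontractWalk B p) a b := by
  induction hp using IsWalk.induction_on with
  | single e he => simpa [uncontractWalk] using isWalk_uncontractArc he
  | cons e p b he _ ih => exact (isWalk_uncontractArc he).append ih

/- The bead-bottom terms: a walk of `contract B` ending at a bead bottom `v` has not yet left the
duplication node `v`, although its lift has already crossed the bead. -/
lemma IsNetwork.contract_dupsOnWalk_singleton_add (hN : B.IsNetwork X) {e : Arc}
    (he : (contract B).ArcOK e) :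
    (contract B).dupsOnWalk [e] + (if B.IsBeadBot e.2.1 then 1 else 0) =
      B.beadsOnWalk (uncontractArc B e) + (if B.IsBeadBot e.1 then 1 else 0) := by
  obtain ⟨h1, -, -⟩ := contract_arcOK he
  have hdup := hN.contract_dupDegrees_iff (hN.contract_supported _ _ he.adj).1
  have hsimple := hN.mult_le_one_of_not_isBeadTop (v := B.beadTop e.2.1) h1
  by_cases hb : B.IsBeadBot e.2.1
  · simp [dupsOnWalk, beadsOnWalk, uncontractArc, hb, hdup, mult_beadTop hb,
      show B.mult e.1 (B.beadTop e.2.1) ≠ 2 by omega, add_comm]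
  · rw [beadTop_of_not_isBeadBot hb] at hsimple
    simp [dupsOnWalk, beadsOnWalk, uncontractArc, hb, hdup, show B.mult e.1 e.2.1 ≠ 2 by omega]

lemma IsWalk.contract_dupsOnWalk_add (hN : B.IsNetwork X) {p : List Arc}
    (hp : (contract B).IsWalk p a b) :
    (contract B).dupsOnWalk p + (if B.IsBeadBot b then 1 else 0) =
      B.beadsOnWalk (uncontractWalk B p) + (if B.IsBeadBot a then 1 else 0) := by
  induction hp using IsWalk.induction_on with
  | single e he => simpa [uncontractWalk] using hN.contract_dupsOnWalk_singleton_add he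
  | cons e p b he _ ih =>
    have := hN.contract_dupsOnWalk_singleton_add he
    rw [dupsOnWalk_cons, uncontractWalk, List.flatMap_cons, beadsOnWalk_append,
      ← uncontractWalk]
    omega

lemma IsNetwork.contract_dupsOnWalk_le {d r : ℕ} (hN : B.IsNetwork X)
    (hbound : ∀ p a b, B.IsWalk p a b → B.beadsOnWalk p ≤ d) (hr : (contract B).IsRoot r)
    {p : List Arc} (hp : (contract B).IsWalk p r b) : (contract B).dupsOnWalk p ≤ d := by
  have hr' : ¬ B.IsBeadBot r :=
    hN.not_isBeadBot_of_inDeg_ne_two (by rw [(hN.contract_isRoot_iff.mp hr).2.1]; omega)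
  have hcount := hp.contract_dupsOnWalk_add hN
  rw [if_neg hr'] at hcount
  have := hbound _ _ _ hp.uncontract
  omega

end Contraction

end DG

/-- there is a duplication tree on `X` consistent with every
MUL-tree in `𝒯` having at most `d` duplication nodes on every root-to-leaf
path iff there is a beaded tree on `X` weakly displaying every MUL-tree in `𝒯`
having at most `d` beads on every directed path. -/
theorem dup_depth_iff_bead_depth (X : Finset ℕ) (Ts : Set DG)
    (hT : ∀ T ∈ Ts, DG.IsMulTree X T) (d : ℕ) :
    (∃ D : DG, DG.IsDupTree X D ∧ (∀ T ∈ Ts, D.ConsistentWith T) ∧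
      ∀ (p : List DG.Arc) (r l : ℕ), D.IsRoot r → D.IsLeafNode l → D.IsWalk p r l →
        D.dupsOnWalk p ≤ d) ↔
    (∃ B : DG, DG.IsBeadedTree X B ∧ (∀ T ∈ Ts, B.Displays T) ∧
      ∀ (p : List DG.Arc) (a b : ℕ), B.IsWalk p a b → B.beadsOnWalk p ≤ d) := by
  constructor
  · rintro ⟨D, hD, hcons, hdepth⟩
    exact ⟨D.expand, DG.expand_isBeadedTree hD,
      fun T hTs => DG.expand_displays hD.supported (hT T hTs) (hcons T hTs),
      fun p a b hp => DG.expand_beadsOnWalk_le hD hdepth hp⟩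
  · rintro ⟨B, hB, hdisp, hdepth⟩
    exact ⟨B.contract, hB.contract_isDupTree,
      fun T hTs => hB.contract_consistentWith (hT T hTs) (hdisp T hTs),
      fun p r l hr _ hp => hB.1.contract_dupsOnWalk_le hdepth hr hp⟩
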